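/- arXiv:2309.01333 — 2 statements merged into one kernel-verified Lean document; each statement's English description precedes it below -/
import Mathlib

section
/- Let I ⊆ ℝ be an interval containing 0, let a ∈ (0, 1), and let u : I → ℝ be a twice differentiable function with u(s) > 0 for all s ∈ I, satisfying u''(s) = (1 - u'(s)²)/(2u(s)) - u(s)/2 on I, together with u(0) = a and u'(0) = 0. Set m = a/2 - a³/6. Then for every s ∈ I one has u'(s)² = 1 - u(s)²/3 - 2m/u(s); in particular 1 - u(s)²/3 - 2m/u(s) ≥ 0, and the quantity (u(s)/2)·(1 - u'(s)² - u(s)²/3) is identically equal to m. -/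
/-- For a positive solution of u'' = (1-(u')²)/(2u) - u/2 with u(0) = a ∈ (0,1) and
u'(0) = 0, setting m = a/2 - a³/6 one has (u')² = 1 - u²/3 - 2m/u everywhere; in
particular 1 - u²/3 - 2m/u ≥ 0 and (u/2)(1 - (u')² - u²/3) ≡ m. -/
theorem stmt_4 (I : Set ℝ) (hI : I.OrdConnected) (h0I : (0:ℝ) ∈ I)
    (a : ℝ) (ha0 : 0 < a) (ha1 : a < 1)
    (u u' u'' : ℝ → ℝ)
    (hu : ∀ s ∈ I, HasDerivAt u (u' s) s)
    (hu' : ∀ s ∈ I, HasDerivAt u' (u'' s) s)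
    (hpos : ∀ s ∈ I, 0 < u s)
    (hode : ∀ s ∈ I, u'' s = (1 - (u' s)^2)/(2 * u s) - u s / 2)
    (hua : u 0 = a) (hu'0 : u' 0 = 0)
    (m : ℝ) (hm : m = a/2 - a^3/6) :
    ∀ s ∈ I, (u' s)^2 = 1 - (u s)^2/3 - 2*m/(u s) ∧
      0 ≤ 1 - (u s)^2/3 - 2*m/(u s) ∧
      (u s)/2 * (1 - (u' s)^2 - (u s)^2/3) = m := by
  set F : ℝ → ℝ := fun t => u t / 2 * (1 - (u' t)^2 - (u t)^2/3) with hF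
  have hFd : ∀ s ∈ I, HasDerivAt F 0 s := by
    intro s hs
    have hne0 : u s ≠ 0 := (hpos s hs).ne'
    have h1 : HasDerivAt (fun t => u t / 2) (u' s / 2) s := (hu s hs).div_const 2
    have h2 : HasDerivAt (fun t => (u' t)^2) (2 * u' s * u'' s) s := by
      simpa [mul_comm, mul_assoc, mul_left_comm] using (hu' s hs).fun_pow 2
    have h3 : HasDerivAt (fun t => (u t)^2 / 3) (2 * u s * u' s / 3) s := by
      simpa [mul_comm, mul_assoc, mul_left_comm] using ((hu s hs).fun_pow 2).div_const 3
    have h4 : HasDerivAt (fun t => 1 - (u' t)^2 - (u t)^2/3)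
        (0 - 2 * u' s * u'' s - 2 * u s * u' s / 3) s :=
      ((hasDerivAt_const s (1:ℝ)).sub h2).sub h3
    have h5 := h1.fun_mul h4
    refine h5.congr_deriv ?_
    rw [hode s hs]
    field_simp
    ring
  have hkey : ∀ s ∈ I, F s = F 0 := by
    intro s hs
    rcases lt_trichotomy s 0 with h | h | h
    · have hsub : Set.Icc s 0 ⊆ I := hI.out hs h0I
      have hdiff : DifferentiableOn ℝ F (Set.Icc s 0) := fun x hx =>
        ((hFd x (hsub hx)).differentiableAt).differentiableWithinAt
      have hzero : ∀ x ∈ Set.Ico s 0, derivWithin F (Set.Icc s 0) x = 0 := by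
        intro x hx
        exact ((hFd x (hsub (Set.Ico_subset_Icc_self hx))).hasDerivWithinAt).derivWithin
          (uniqueDiffOn_Icc h x (Set.Ico_subset_Icc_self hx))
      have := constant_of_derivWithin_zero hdiff hzero 0 (Set.right_mem_Icc.2 h.le)
      have hs' := constant_of_derivWithin_zero hdiff hzero s (Set.left_mem_Icc.2 h.le)
      rw [hs', ← this]
    · simp [h]
    · have hsub : Set.Icc 0 s ⊆ I := hI.out h0I hs
      have hdiff : DifferentiableOn ℝ F (Set.Icc 0 s) := fun x hx =>
        ((hFd x (hsub hx)).differentiableAt).differentiableWithinAt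
      have hzero : ∀ x ∈ Set.Ico 0 s, derivWithin F (Set.Icc 0 s) x = 0 := by
        intro x hx
        exact ((hFd x (hsub (Set.Ico_subset_Icc_self hx))).hasDerivWithinAt).derivWithin
          (uniqueDiffOn_Icc h x (Set.Ico_subset_Icc_self hx))
      exact constant_of_derivWithin_zero hdiff hzero s (Set.right_mem_Icc.2 h.le)
  have hF0 : F 0 = m := by
    simp only [hF, hua, hu'0, hm]
    ring
  intro s hs
  have hne : u s ≠ 0 := (hpos s hs).ne'
  have hFs : u s / 2 * (1 - (u' s)^2 - (u s)^2/3) = m := by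
    rw [← hF0]; exact hkey s hs
  have h1 : (u' s)^2 = 1 - (u s)^2/3 - 2*m/(u s) := by
    have h2 : u s * (1 - (u' s)^2 - (u s)^2/3) = 2*m := by linear_combination 2*hFs
    field_simp
    linear_combination (-3 : ℝ) * h2
  refine ⟨h1, ?_, hFs⟩
  rw [← h1]
  positivity
end

section
/- Let a ∈ (0, 1), set m = a/2 - a³/6, and let r₋ < r₊ be the two positive roots of f_m(r) = 1 - r²/3 - 2m/r. If u : I → ℝ is a twice differentiable positive function on an interval I containing 0 that satisfies u''(s) = (1 - u'(s)²)/(2u(s)) - u(s)/2 with u(0) = a and u'(0) = 0, then r₋ ≤ u(s) ≤ r₊ for every s ∈ I. -/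
set_option maxHeartbeats 1000000


/-- For a ∈ (0,1), m = a/2 - a³/6, and r₋ < r₊ the two positive roots of
f_m(r) = 1 - r²/3 - 2m/r, any positive solution of u'' = (1-(u')²)/(2u) - u/2 with
u(0) = a, u'(0) = 0 satisfies r₋ ≤ u(s) ≤ r₊ on its interval of definition. -/
theorem stmt_5 (a : ℝ) (ha0 : 0 < a) (ha1 : a < 1)
    (m : ℝ) (hm : m = a/2 - a^3/6)
    (rm rp : ℝ) (hrm : 0 < rm) (hlt : rm < rp)
    (hrm0 : 1 - rm^2/3 - 2*m/rm = 0) (hrp0 : 1 - rp^2/3 - 2*m/rp = 0)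
    (honly : ∀ r : ℝ, 0 < r → 1 - r^2/3 - 2*m/r = 0 → r = rm ∨ r = rp)
    (I : Set ℝ) (hI : I.OrdConnected) (h0I : (0:ℝ) ∈ I)
    (u u' u'' : ℝ → ℝ)
    (hu : ∀ s ∈ I, HasDerivAt u (u' s) s)
    (hu' : ∀ s ∈ I, HasDerivAt u' (u'' s) s)
    (hpos : ∀ s ∈ I, 0 < u s)
    (hode : ∀ s ∈ I, u'' s = (1 - (u' s)^2)/(2 * u s) - u s / 2)
    (hua : u 0 = a) (hu'0 : u' 0 = 0) :
    ∀ s ∈ I, rm ≤ u s ∧ u s ≤ rp := by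
  set F : ℝ → ℝ := fun t => u t - u t * (u' t)^2 - (u t)^3/3 with hF
  -- derivative of F is zero on I
  have hFd : ∀ s ∈ I, HasDerivAt F 0 s := by
    intro s hs
    have h1 := hu s hs
    have h2 := hu' s hs
    have hne : u s ≠ 0 := (hpos s hs).ne'
    have hD : HasDerivAt F
        (u' s - (u' s * (u' s)^2 + u s * (2 * u' s ^ 1 * u'' s))
          - (3 * u s ^ 2 * u' s)/3) s :=
      (h1.sub (h1.mul (h2.pow 2))).sub ((h1.pow 3).div_const 3)
    convert hD using 1
    rw [hode s hs]
    field_simp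
    ring
  -- F is constant
  have hconv : Convex ℝ I := hI.convex
  have hconst : ∀ s ∈ I, F s = F 0 := by
    intro s hs
    have hb := hconv.norm_image_sub_le_of_norm_hasDerivWithin_le
      (f' := fun _ => (0:ℝ)) (C := 0)
      (fun x hx => (hFd x hx).hasDerivWithinAt)
      (fun x _ => by simp) h0I hs
    simp at hb
    have : |F s - F 0| ≤ 0 := by simpa [Real.norm_eq_abs] using hb
    have := abs_nonpos_iff.mp (le_trans (le_refl _) this)
    linarith [sub_eq_zero.mp this]
  have hF0 : F 0 = 2 * m := by
    simp only [hF, hua, hu'0]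
    rw [hm]; ring
  -- root identities
  have hrpp : 0 < rp := hrm.trans hlt
  have e1 : rm^3 - 3*rm + 6*m = 0 := by
    have := hrm0
    field_simp at this
    nlinarith [this]
  have e2 : rp^3 - 3*rp + 6*m = 0 := by
    have := hrp0
    field_simp at this
    nlinarith [this]
  have sum3 : rm^2 + rm*rp + rp^2 = 3 := by
    have hne : rm - rp ≠ 0 := by linarith
    have : (rm - rp) * (rm^2 + rm*rp + rp^2 - 3) = 0 := by nlinarith [e1, e2]
    have := mul_eq_zero.mp this
    rcases this with h | h
    · exact absurd h hne
    · linarith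
  have prodm : rm * rp * (rm + rp) = 6 * m := by nlinarith [e1, sum3]
  intro s hs
  have hus := hpos s hs
  -- (u')² u = u - u³/3 - 2m ≥ 0
  have hcons : u s - u s * (u' s)^2 - (u s)^3/3 = 2 * m := by
    rw [← hF0]; exact hconst s hs
  have hnn : u s - (u s)^3/3 - 2*m = u s * (u' s)^2 := by linarith
  have hkey : (u s)^3 - 3 * (u s) + 6 * m ≤ 0 := by
    nlinarith [mul_nonneg hus.le (sq_nonneg (u' s))]
  have hfact : (u s - rm) * (u s - rp) * (u s + rm + rp) ≤ 0 := by
    nlinarith [hkey, sum3, prodm]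
  have hposum : 0 < u s + rm + rp := by linarith
  have hprod : (u s - rm) * (u s - rp) ≤ 0 := by
    by_contra h
    push_neg at h
    exact absurd hfact (not_le.mpr (mul_pos h hposum))
  constructor
  · by_contra h
    push_neg at h
    have : 0 < (u s - rm) * (u s - rp) :=
      mul_pos_of_neg_of_neg (by linarith) (by linarith)
    linarith
  · by_contra h
    push_neg at h
    have : 0 < (u s - rm) * (u s - rp) := mul_pos (by linarith) (by linarith)
    linarith
end
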